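/- If an accepting run r_P of the product automaton has prefix-suffix structure with suffix repeating the cycle ρ = f p1 ... pn f whose S_{P,π}-costs are c→(ρ), c(ρ), c←(ρ), then C_P(r_P) = max(c(ρ), c→(ρ) + c←(ρ)). -/
import Mathlib


open scoped Classical

/-- Cumulative time sequence of a run. -/
def timeSeq {V : Type*} (w : V → V → ℝ) (r : ℕ → V) : ℕ → ℝ
  | 0 => 0
  | n + 1 => timeSeq w r n + w (r n) (r (n+1))

/-- Cost of an infinite run: limsup of gaps between consecutive visit times to
`Sπ`; `⊤` if `Sπ` is visited only finitely often. -/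
noncomputable def runCost {V : Type*} (w : V → V → ℝ) (Sπ : Set V) (r : ℕ → V) : EReal :=
  if {i | r i ∈ Sπ}.Infinite then
    Filter.limsup
      (fun n => ((timeSeq w r (Nat.nth (fun i => r i ∈ Sπ) (n+1))
        - timeSeq w r (Nat.nth (fun i => r i ∈ Sπ) n) : ℝ) : EReal))
      Filter.atTop
  else ⊤

/-- `c→(ρ)` of the cycle occupying positions `[a, b]` of the run `r`:
the time from the start of the cycle to its first `Sπ`-visit. -/
noncomputable def cFwd {V : Type*} (w : V → V → ℝ) (Sπ : Set V) (r : ℕ → V)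
    (a b : ℕ) : ℝ :=
  sInf {x : ℝ | ∃ i, a ≤ i ∧ i ≤ b ∧ r i ∈ Sπ ∧ x = timeSeq w r i - timeSeq w r a}

/-- `c(ρ)`: the maximum gap between consecutive `Sπ`-visits inside positions
`[a, b]` of the run `r` (`0` if there is at most one visit, by `sSup ∅ = 0`). -/
noncomputable def cMid {V : Type*} (w : V → V → ℝ) (Sπ : Set V) (r : ℕ → V)
    (a b : ℕ) : ℝ :=
  sSup {x : ℝ | ∃ i j, a ≤ i ∧ i < j ∧ j ≤ b ∧ r i ∈ Sπ ∧ r j ∈ Sπ ∧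
    (∀ l, i < l → l < j → r l ∉ Sπ) ∧ x = timeSeq w r j - timeSeq w r i}

/-- `c←(ρ)`: the time from the last `Sπ`-visit in positions `[a, b]` to the end
of the cycle. -/
noncomputable def cBwd {V : Type*} (w : V → V → ℝ) (Sπ : Set V) (r : ℕ → V)
    (a b : ℕ) : ℝ :=
  sInf {x : ℝ | ∃ i, a ≤ i ∧ i ≤ b ∧ r i ∈ Sπ ∧ x = timeSeq w r b - timeSeq w r i}

lemma timeSeq_strictMono {V : Type*} (w : V → V → ℝ) (r : ℕ → V)
    (hw : ∀ u v, 0 < w u v) : StrictMono (timeSeq w r) :=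
  strictMono_nat_of_lt_succ fun n => lt_add_of_pos_right _ (hw (r n) (r (n+1)))

lemma r_shift {V : Type*} (r : ℕ → V) {N T : ℕ}
    (hperiodic : ∀ i ≥ N, r (i + T) = r i) :
    ∀ (k i : ℕ), N ≤ i → r (i + k * T) = r i := by
  intro k
  induction k with
  | zero => simp
  | succ k ih =>
    intro i hi
    have h1 : i + (k+1) * T = (i + k * T) + T := by ring
    rw [h1, hperiodic _ (le_trans hi (Nat.le_add_right _ _)), ih i hi]

lemma timeSeq_shift {V : Type*} (w : V → V → ℝ) (r : ℕ → V) {N T : ℕ}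
    (hperiodic : ∀ i ≥ N, r (i + T) = r i) :
    ∀ i, N ≤ i →
      timeSeq w r (i + T) = timeSeq w r i + (timeSeq w r (N + T) - timeSeq w r N) := by
  intro i hi
  induction i, hi using Nat.le_induction with
  | base => ring
  | succ i hi ih =>
    have h1 : i + 1 + T = (i + T) + 1 := by ring
    rw [h1]
    show timeSeq w r (i+T) + w (r (i+T)) (r ((i+T)+1)) = _
    rw [← h1, hperiodic i hi, hperiodic (i+1) (by omega), ih]
    show _ = timeSeq w r i + w (r i) (r (i+1)) + _
    ring

lemma timeSeq_shift_mul {V : Type*} (w : V → V → ℝ) (r : ℕ → V) {N T : ℕ}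
    (hperiodic : ∀ i ≥ N, r (i + T) = r i) :
    ∀ (k i : ℕ), N ≤ i →
      timeSeq w r (i + k * T)
        = timeSeq w r i + k * (timeSeq w r (N + T) - timeSeq w r N) := by
  intro k
  induction k with
  | zero => simp
  | succ k ih =>
    intro i hi
    have h1 : i + (k+1) * T = (i + k * T) + T := by ring
    rw [h1, timeSeq_shift w r hperiodic _ (by omega), ih i hi]
    push_cast
    ring


/-- For an accepting run in prefix-suffix structure whose suffix
repeats the cycle `ρ = f p1 ... pn f` (positions `[N, N+T]` of the run), with
`Sπ`-costs `c→(ρ), c(ρ), c←(ρ)`, the cost of the run is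
`max (c(ρ), c→(ρ) + c←(ρ))`. -/
theorem prefix_suffix_cost_formula
    {V : Type*} [Fintype V]
    (E : V → V → Prop) (w : V → V → ℝ) (hw : ∀ u v, 0 < w u v)
    (S0 F Sπ : Set V)
    (r : ℕ → V) (N T : ℕ)
    (hrun : r 0 ∈ S0 ∧ ∀ i, E (r i) (r (i+1)))
    (hT : 0 < T) (hf : r N ∈ F)
    (hperiodic : ∀ i ≥ N, r (i + T) = r i)
    (hnof : ∀ i, N < i → i < N + T → r i ≠ r N)
    (hSvisit : ∃ i, N ≤ i ∧ i < N + T ∧ r i ∈ Sπ) :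
    runCost w Sπ r =
      ((max (cMid w Sπ r N (N + T))
        (cFwd w Sπ r N (N + T) + cBwd w Sπ r N (N + T)) : ℝ) : EReal) := by
  classical
  obtain ⟨i₀, hi₀N, hi₀T, hi₀S⟩ := hSvisit
  have hmono : StrictMono (timeSeq w r) := timeSeq_strictMono w r hw
  have hmono' : Monotone (timeSeq w r) := hmono.monotone
  set time := timeSeq w r with htime
  set P : ℝ := time (N + T) - time N with hPdef
  have hP : 0 < P := sub_pos.2 (hmono (by omega))
  have hrsh : ∀ (k i : ℕ), N ≤ i → r (i + k * T) = r i := r_shift r hperiodic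
  have hts : ∀ (k i : ℕ), N ≤ i → time (i + k * T) = time i + k * P :=
    timeSeq_shift_mul w r hperiodic
  -- infinitely many visits
  have hInf : {i | r i ∈ Sπ}.Infinite := by
    apply Set.infinite_of_injective_forall_mem (f := fun k : ℕ => i₀ + k * T)
    · intro a b hab
      simp only at hab
      have : a * T = b * T := by omega
      exact Nat.eq_of_mul_eq_mul_right hT this
    · intro k
      show r (i₀ + k * T) ∈ Sπ
      rw [hrsh k i₀ hi₀N]; exact hi₀S
  -- first visit F₀ and last visit L in the window
  have hQ : ∃ i, N ≤ i ∧ i ≤ N + T ∧ r i ∈ Sπ := ⟨i₀, hi₀N, by omega, hi₀S⟩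
  set F₀ := Nat.find hQ with hF₀def
  have hF₀ : N ≤ F₀ ∧ F₀ ≤ N + T ∧ r F₀ ∈ Sπ := Nat.find_spec hQ
  have hF₀min : ∀ j, N ≤ j → j ≤ N + T → r j ∈ Sπ → F₀ ≤ j :=
    fun j h1 h2 h3 => Nat.find_min' hQ ⟨h1, h2, h3⟩
  set L := Nat.findGreatest (fun i => N ≤ i ∧ r i ∈ Sπ) (N + T) with hLdef
  have hL : N ≤ L ∧ r L ∈ Sπ := Nat.findGreatest_spec (P := fun i => N ≤ i ∧ r i ∈ Sπ) (by omega : i₀ ≤ N + T) ⟨hi₀N, hi₀S⟩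
  have hL_le : L ≤ N + T := Nat.findGreatest_le _
  have hLmax : ∀ j, N ≤ j → j ≤ N + T → r j ∈ Sπ → j ≤ L :=
    fun j h1 h2 h3 => Nat.le_findGreatest h2 ⟨h1, h3⟩
  -- values of cFwd and cBwd
  have hFwd : cFwd w Sπ r N (N + T) = time F₀ - time N := by
    unfold cFwd
    apply le_antisymm
    · apply csInf_le
      · exact ⟨0, by rintro x ⟨i, h1, h2, h3, rfl⟩; simp only [sub_nonneg]; exact hmono' h1⟩
      · exact ⟨F₀, hF₀.1, hF₀.2.1, hF₀.2.2, rfl⟩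
    · apply le_csInf
      · exact ⟨_, ⟨F₀, hF₀.1, hF₀.2.1, hF₀.2.2, rfl⟩⟩
      rintro x ⟨i, h1, h2, h3, rfl⟩
      have := hmono' (hF₀min i h1 h2 h3)
      linarith
  have hBwd : cBwd w Sπ r N (N + T) = time (N + T) - time L := by
    unfold cBwd
    apply le_antisymm
    · apply csInf_le
      · exact ⟨0, by rintro x ⟨i, h1, h2, h3, rfl⟩; simp only [sub_nonneg]; exact hmono' h2⟩
      · exact ⟨L, hL.1, hL_le, hL.2, rfl⟩
    · apply le_csInf
      · exact ⟨_, ⟨L, hL.1, hL_le, hL.2, rfl⟩⟩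
      rintro x ⟨i, h1, h2, h3, rfl⟩
      have := hmono' (hLmax i h1 h2 h3)
      linarith
  set Smid := {x : ℝ | ∃ i j, N ≤ i ∧ i < j ∧ j ≤ N + T ∧ r i ∈ Sπ ∧ r j ∈ Sπ ∧
    (∀ l, i < l → l < j → r l ∉ Sπ) ∧ x = time j - time i} with hSmiddef
  have hMid : cMid w Sπ r N (N + T) = sSup Smid := rfl
  have hSmid_bdd : BddAbove Smid := by
    refine ⟨P, ?_⟩
    rintro x ⟨i, j, h1, h2, h3, -, -, -, rfl⟩
    have hi := hmono' h1
    have hj := hmono' h3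
    rw [hPdef]; linarith
  have hSmid_pos : ∀ x ∈ Smid, 0 < x := by
    rintro x ⟨i, j, h1, h2, h3, -, -, -, rfl⟩
    exact sub_pos.2 (hmono h2)
  have hSmid_fin : Smid.Finite := by
    apply Set.Finite.subset (((Set.finite_Iic (N+T)).prod (Set.finite_Iic (N+T))).image
      (fun q : ℕ × ℕ => time q.2 - time q.1))
    rintro x ⟨i, j, h1, h2, h3, -, -, -, rfl⟩
    exact ⟨(i, j), ⟨Set.mem_Iic.2 (by omega), Set.mem_Iic.2 h3⟩, rfl⟩
  set Mv : ℝ := max (sSup Smid) ((time F₀ - time N) + (time (N + T) - time L)) with hMvdef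
  rw [hMid, hFwd, hBwd, ← hMvdef]
  -- consecutive visit pairs
  set Consec : ℕ → ℕ → Prop := fun p q =>
    p < q ∧ r p ∈ Sπ ∧ r q ∈ Sπ ∧ ∀ l, p < l → l < q → r l ∉ Sπ with hCdef
  -- upper bound: every consecutive gap beyond N is at most Mv
  have hupper : ∀ p q, N ≤ p → Consec p q → time q - time p ≤ Mv := by
    rintro p q hNp ⟨hpq, hpS, hqS, hbet⟩
    have hqle : q ≤ p + T := by
      by_contra h
      push_neg at h
      exact hbet (p + T) (by omega) h (by rw [hperiodic p hNp]; exact hpS)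
    set k := (p - N) / T with hk
    set m := (p - N) % T with hm
    have hdm : T * k + m = p - N := Nat.div_add_mod _ _
    have hmlt : m < T := Nat.mod_lt _ hT
    set p₀ := N + m with hp₀def
    have hpEq : p = p₀ + k * T := by
      calc p = N + (p - N) := by omega
        _ = N + (T * k + m) := by rw [hdm]
        _ = p₀ + k * T := by rw [hp₀def]; ring
    have hNp₀ : N ≤ p₀ := by omega
    have hp₀lt : p₀ < N + T := by omega
    set q₀ := q - k * T with hq₀def
    have hq₀Eq : q₀ + k * T = q := Nat.sub_add_cancel (by omega)
    have hq₀p₀ : p₀ < q₀ := by omega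
    have hNq₀ : N ≤ q₀ := by omega
    have hq₀le : q₀ ≤ p₀ + T := by omega
    have hrp : r p = r p₀ := by rw [hpEq]; exact hrsh k p₀ hNp₀
    have hrq : r q = r q₀ := by rw [← hq₀Eq]; exact hrsh k q₀ hNq₀
    have htp : time p = time p₀ + k * P := by rw [hpEq]; exact hts k p₀ hNp₀
    have htq : time q = time q₀ + k * P := by rw [← hq₀Eq]; exact hts k q₀ hNq₀
    have hpS' : r p₀ ∈ Sπ := hrp ▸ hpS
    have hqS' : r q₀ ∈ Sπ := hrq ▸ hqS
    have hgap : time q - time p = time q₀ - time p₀ := by rw [htp, htq]; ring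
    have hbet₀ : ∀ l, p₀ < l → l < q₀ → r l ∉ Sπ := by
      intro l h1 h2 hl
      refine hbet (l + k * T) (by omega) (by omega) ?_
      rw [hrsh k l (by omega)]; exact hl
    rcases le_or_gt q₀ (N + T) with hc | hc
    · have hmem : time q₀ - time p₀ ∈ Smid :=
        ⟨p₀, q₀, hNp₀, hq₀p₀, hc, hpS', hqS', hbet₀, rfl⟩
      have := le_csSup hSmid_bdd hmem
      rw [hgap]
      exact le_trans this (le_max_left _ _)
    · -- wrap-around case
      set q₁ := q₀ - T with hq₁def
      have hq₁Eq : q₁ + T = q₀ := Nat.sub_add_cancel (by omega)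
      have hNq₁ : N < q₁ := by omega
      have hq₁le : q₁ ≤ N + T := by omega
      have hrq₁ : r q₀ = r q₁ := by rw [← hq₁Eq]; exact hperiodic q₁ (by omega)
      have htq₁ : time q₀ = time q₁ + P := by
        rw [← hq₁Eq, hPdef]; exact timeSeq_shift w r hperiodic q₁ (by omega)
      have hq₁S : r q₁ ∈ Sπ := hrq₁ ▸ hqS'
      -- p₀ is at least the last visit L
      have hLp₀ : L ≤ p₀ := by
        by_contra h
        push_neg at h
        exact hbet₀ L h (by omega) hL.2
      -- q₁ is at most the first visit F₀
      have hq₁F : q₁ ≤ F₀ := by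
        by_contra h
        push_neg at h
        refine hbet (F₀ + (k+1) * T) ?_ ?_ ?_
        · have : p₀ < F₀ + T := by omega
          calc p = p₀ + k * T := hpEq
            _ < (F₀ + T) + k * T := by omega
            _ = F₀ + (k+1) * T := by ring
        · calc F₀ + (k+1) * T = (F₀ + T) + k * T := by ring
            _ < q₁ + T + k * T := by omega
            _ = q₀ + k * T := by rw [hq₁Eq]
            _ = q := hq₀Eq
        · rw [hrsh (k+1) F₀ hF₀.1]; exact hF₀.2.2
      have h1 : time q₁ ≤ time F₀ := hmono' hq₁F
      have h2 : time L ≤ time p₀ := hmono' hLp₀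
      rw [hgap, htq₁, hPdef]
      refine le_trans ?_ (le_max_right _ _)
      linarith
  -- a consecutive pair achieving Mv, repeated periodically
  have hpairwin : F₀ < L → ∃ x ∈ Smid, True := by
    intro hFL
    have hb : ∃ j, F₀ < j ∧ j ≤ N + T ∧ r j ∈ Sπ := ⟨L, hFL, hL_le, hL.2⟩
    set b := Nat.find hb with hbdef
    have hbs := Nat.find_spec hb
    refine ⟨time b - time F₀, ⟨F₀, b, hF₀.1, hbs.1, hbs.2.1, hF₀.2.2, hbs.2.2, ?_, rfl⟩, trivial⟩
    intro l h1 h2 hl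
    have : b ≤ l := Nat.find_min' hb ⟨h1, by omega, hl⟩
    omega
  have hlow : ∃ a b, N ≤ a ∧ Consec a b ∧ time b - time a = Mv := by
    rcases le_total ((time F₀ - time N) + (time (N + T) - time L)) (sSup Smid) with hcase | hcase
    · -- Mv = sSup Smid
      have hMveq : Mv = sSup Smid := max_eq_left hcase
      have hne : Smid.Nonempty := by
        by_contra h
        rw [Set.not_nonempty_iff_eq_empty] at h
        rw [h, Real.sSup_empty] at hcase
        have h1 : time N ≤ time F₀ := hmono' hF₀.1
        have h2 : time L ≤ time (N + T) := hmono' hL_le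
        have hFN : F₀ = N := by
          by_contra hne'
          have : time N < time F₀ := hmono (by omega)
          linarith
        have hLN : L = N + T := by
          by_contra hne'
          have : time L < time (N + T) := hmono (by omega)
          linarith
        obtain ⟨x, hx, -⟩ := hpairwin (by omega)
        rw [h] at hx
        exact hx
      obtain ⟨a, b, h1, h2, h3, h4, h5, h6, h7⟩ := hne.csSup_mem hSmid_fin
      exact ⟨a, b, h1, ⟨h2, h4, h5, h6⟩, by rw [← h7, hMveq]⟩
    · -- Mv = cFwd + cBwd
      have hMveq : Mv = (time F₀ - time N) + (time (N + T) - time L) := max_eq_right hcase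
      have hLF : L < F₀ + T := by
        by_contra h
        push_neg at h
        have hFN : F₀ = N := by omega
        have hLN : L = N + T := by omega
        obtain ⟨x, hx, -⟩ := hpairwin (by omega)
        have hxpos := hSmid_pos x hx
        have := le_csSup hSmid_bdd hx
        rw [hFN, hLN] at hcase
        simp only [sub_self, add_zero] at hcase
        linarith
      refine ⟨L, F₀ + T, hL.1, ⟨hLF, hL.2, by rw [hperiodic F₀ hF₀.1]; exact hF₀.2.2, ?_⟩, ?_⟩
      · intro l h1 h2 hl
        rcases le_or_gt l (N + T) with h3 | h3
        · have := hLmax l (by omega) h3 hl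
          omega
        · have hl' : l - T + T = l := by omega
          have hre := hperiodic (l - T) (by omega : N ≤ l - T)
          rw [hl'] at hre
          have hvis : r (l - T) ∈ Sπ := hre ▸ hl
          have := hF₀min (l - T) (by omega) (by omega) hvis
          omega
      · have hFT : time (F₀ + T) = time F₀ + P := by
          rw [hPdef]; exact timeSeq_shift w r hperiodic F₀ hF₀.1
        rw [hMveq, hFT, hPdef]
        ring
  obtain ⟨a, b, haN, haC, hgap⟩ := hlow
  have hshift : ∀ kk : ℕ, Consec (a + kk * T) (b + kk * T) ∧
      time (b + kk * T) - time (a + kk * T) = Mv := by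
    intro kk
    obtain ⟨hab, haS, hbS, hbet⟩ := haC
    have hNb : N ≤ b := by omega
    constructor
    · refine ⟨by omega, by rw [hrsh kk a haN]; exact haS, by rw [hrsh kk b hNb]; exact hbS, ?_⟩
      intro l h1 h2 hl
      have hlk : l - kk * T + kk * T = l := by omega
      have hre := hrsh kk (l - kk * T) (by omega : N ≤ l - kk * T)
      rw [hlk] at hre
      exact hbet (l - kk * T) (by omega) (by omega) (hre ▸ hl)
    · rw [hts kk a haN, hts kk b hNb]
      linarith
  -- now compute the limsup
  have hInf' : (setOf (fun i => r i ∈ Sπ)).Infinite := hInf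
  set p' : ℕ → Prop := fun i => r i ∈ Sπ with hp'def
  have hsm : StrictMono (Nat.nth p') := Nat.nth_strictMono hInf'
  have hmem : ∀ n, r (Nat.nth p' n) ∈ Sπ := fun n => Nat.nth_mem_of_infinite hInf' n
  have hconsec : ∀ n, Consec (Nat.nth p' n) (Nat.nth p' (n + 1)) := by
    intro n
    refine ⟨hsm (Nat.lt_succ_self n), hmem n, hmem (n+1), ?_⟩
    intro l h1 h2 hl
    have hc := Nat.nth_count (p := p') hl
    have hgt : n < Nat.count p' l := by
      rw [← Nat.nth_lt_nth hInf', hc]; exact h1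
    have hlt : Nat.count p' l < n + 1 := by
      rw [← Nat.nth_lt_nth hInf', hc]; exact h2
    omega
  rw [runCost, if_pos hInf]
  apply le_antisymm
  · apply Filter.limsup_le_of_le Filter.isCobounded_le_of_bot
    filter_upwards [Filter.eventually_ge_atTop N] with n hn
    have hNle : N ≤ Nat.nth p' n := le_trans hn hsm.le_apply
    have := hupper _ _ hNle (hconsec n)
    exact_mod_cast this
  · apply Filter.le_limsup_of_frequently_le'
    rw [Filter.frequently_atTop]
    intro n₀
    set kk := Nat.nth p' n₀ with hkkdef
    obtain ⟨hC, hgk⟩ := hshift kk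
    set A := a + kk * T with hAdef
    set B := b + kk * T with hBdef
    have hAS : r A ∈ Sπ := hC.2.1
    have hBS : r B ∈ Sπ := hC.2.2.1
    set n := Nat.count p' A with hndef
    have hnthA : Nat.nth p' n = A := Nat.nth_count hAS
    have hkkA : kk ≤ A := by
      have : kk ≤ kk * T := Nat.le_mul_of_pos_right kk hT
      omega
    refine ⟨n, ?_, ?_⟩
    · by_contra h
      push_neg at h
      have : Nat.nth p' n < kk := hsm h
      omega
    · have hB : Nat.nth p' (n + 1) = B := by
        have h1 : Nat.nth p' n < Nat.nth p' (n + 1) := hsm (Nat.lt_succ_self n)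
        have hcb : Nat.nth p' (Nat.count p' B) = B := Nat.nth_count hBS
        have h2 : n < Nat.count p' B := by
          rw [← Nat.nth_lt_nth hInf', hnthA, hcb]; exact hC.1
        have h3 : Nat.nth p' (n + 1) ≤ B := by
          rw [← hcb]; exact hsm.monotone h2
        rcases lt_or_eq_of_le h3 with h4 | h4
        · exact absurd (hmem (n + 1)) (hC.2.2.2 _ (hnthA ▸ h1) h4)
        · exact h4
      rw [hB, hnthA, hgk]
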